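/- Let G be a finite group, N ⊴ G, ψ ∈ Irr(N), Z = Z(ψ^G), with N/Z abelian. Then the G/N-invariant isotropic subgroups of N/Z with respect to the form c̄(ρZ,σZ) = ζ([ρ,σ]) are exactly the images LZ/Z of normal subgroups L ⊴ G with L ≤ N and [L,L] ≤ Ker(ψ^G). Consequently (G,N,ψ) is linearly irreducible if and only if 1 is the only G/N-invariant isotropic subgroup of N/Z. -/

import Mathlib

open scoped BigOperators Pointwise Classical

noncomputable section

variable {G : Type}

/-- Extension by zero to `G` of a function defined on a subgroup `H` of `G`. -/
def extZero [Group G] (H : Subgroup G) (φ : H → ℂ) (g : G) : ℂ :=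
  if h : g ∈ H then φ ⟨g, h⟩ else 0

/-- The character of `G` induced from the function `φ` on the subgroup `H`. -/
def indChar [Group G] [Fintype G] (H : Subgroup G) (φ : H → ℂ) : G → ℂ :=
  fun g => (Nat.card H : ℂ)⁻¹ * ∑ x : G, extZero H φ (x * g * x⁻¹)

/-- The character of an intermediate subgroup `K` induced from `φ` on `H ≤ K`,
viewed as a function on `G` supported on `K`. -/
def indCharTo [Group G] [Fintype G] (K H : Subgroup G) (φ : H → ℂ) : G → ℂ :=
  fun g => (Nat.card H : ℂ)⁻¹ * ∑ x : G, if x ∈ K then extZero H φ (x * g * x⁻¹) else 0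

/-- The kernel of a character: the set where it takes the value `f 1`. -/
def kerSet {X : Type*} [One X] (f : X → ℂ) : Set X := {x | f x = f 1}

/-- The center of a character: the set where `|f x| = f 1`. -/
def centSet {X : Type*} [One X] (f : X → ℂ) : Set X :=
  {x | (((‖f x‖ : ℝ)) : ℂ) = f 1}

/-- The central character associated with a character. -/
def zetaChar {X : Type*} [One X] (f : X → ℂ) : X → ℂ := fun x => f x / f 1

/-- `f` is a (nonzero) complex character of `X`. -/
def IsChar (X : Type) [Group X] (f : X → ℂ) : Prop :=
  (∃ V : FDRep ℂ X, FDRep.character V = f) ∧ f 1 ≠ 0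

/-- `f` is an irreducible complex character of `X`. -/
def IsIrrChar (X : Type) [Group X] (f : X → ℂ) : Prop :=
  ∃ V : FDRep ℂ X, CategoryTheory.Simple V ∧ FDRep.character V = f

/-- The inner product of two class functions on the subgroup `H` of `G`. -/
def innerSub [Group G] [Fintype G] (H : Subgroup G) (f φ : H → ℂ) : ℂ :=
  (Nat.card H : ℂ)⁻¹ * ∑ x : G, extZero H f x * (starRingEnd ℂ) (extZero H φ x)

/-- Restriction of a function on `K` to a smaller subgroup `L ≤ K`. -/
def resTo [Group G] {K : Subgroup G} (L : Subgroup G) (h : L ≤ K) (χ : K → ℂ) : L → ℂ :=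
  fun x => χ ⟨x, h x.2⟩

/-- `lam : G → ℂ` is (the extension of) a linear character of the subgroup `L`. -/
def IsLinOn [Group G] (L : Subgroup G) (lam : G → ℂ) : Prop :=
  lam 1 = 1 ∧ ∀ a ∈ L, ∀ b ∈ L, lam (a * b) = lam a * lam b

/-- The stabilizer in `G` of the character `φ` of the subgroup `H`. -/
def stabSet [Group G] (H : Subgroup G) (φ : H → ℂ) : Set G :=
  {g : G | (∀ x : G, x ∈ H ↔ g⁻¹ * x * g ∈ H) ∧
    ∀ x : G, extZero H φ (g⁻¹ * x * g) = extZero H φ x}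

/-- The stabilizer in `G` of a linear character `lam` of a normal subgroup `L`,
as a subgroup of `G`. -/
def linStab [Group G] (L : Subgroup G) (hL : L.Normal) (lam : G → ℂ) : Subgroup G where
  carrier := {g : G | ∀ x ∈ L, lam (g⁻¹ * x * g) = lam x}
  one_mem' := by intro x hx; simp
  mul_mem' := by
    intro a b ha hb x hx
    have h1 : a⁻¹ * x * a ∈ L := by simpa using hL.conj_mem x hx a⁻¹
    have key : (a * b)⁻¹ * x * (a * b) = b⁻¹ * (a⁻¹ * x * a) * b := by group
    rw [key, hb _ h1, ha _ hx]
  inv_mem' := by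
    intro a ha x hx
    have h1 : a * x * a⁻¹ ∈ L := hL.conj_mem x hx a
    have h2 := ha _ h1
    rw [show a⁻¹ * (a * x * a⁻¹) * a = x from by group] at h2
    rw [show a⁻¹⁻¹ * x * a⁻¹ = a * x * a⁻¹ from by group]
    exact h2.symm


section MyAux

open Polynomial Matrix Module


/-- Sum of a real multiset bounded by `c` times cardinality. -/
lemma auxSumLe (t : Multiset ℝ) (c : ℝ) (h : ∀ a ∈ t, a ≤ c) : t.sum ≤ c * t.card := by
  induction t using Multiset.induction_on with
  | empty => simp
  | cons a t ih =>
    simp only [Multiset.sum_cons, Multiset.card_cons]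
    have h1 : a ≤ c := h a (Multiset.mem_cons_self a t)
    have h2 : t.sum ≤ c * t.card := ih (fun b hb => h b (Multiset.mem_cons_of_mem hb))
    push_cast
    nlinarith

/-- Triangle equality: if the norm of a complex multiset sum attains the max `c * card`,
every element equals `c` times the common unit direction. -/
lemma auxTri (s : Multiset ℂ) (c : ℝ) (hb : ∀ a ∈ s, ‖a‖ ≤ c)
    (hsum : ‖s.sum‖ = c * s.card) (hpos : 0 < ‖s.sum‖) :
    ∀ a ∈ s, a = (c : ℂ) * (s.sum / (‖s.sum‖ : ℂ)) := by
  intro a ha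
  set T := s.sum with hT
  set R : ℝ := ‖T‖ with hR
  have hRpos : 0 < R := hpos
  have hRne : (R : ℂ) ≠ 0 := by exact_mod_cast hRpos.ne'
  set u : ℂ := T / (R : ℂ) with hu
  have hkey : (starRingEnd ℂ) T * T = ((R : ℂ)) ^ 2 := by
    rw [mul_comm, Complex.mul_conj]
    rw [Complex.normSq_eq_norm_sq]
    push_cast
    rw [hR]
  have huT : (starRingEnd ℂ) u * T = (R : ℂ) := by
    rw [hu, map_div₀]
    rw [div_mul_eq_mul_div, Complex.conj_ofReal, hkey, sq]
    exact mul_div_cancel_right₀ _ hRne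
  have hnu : ‖u‖ = 1 := by
    rw [hu, norm_div, Complex.norm_real, Real.norm_eq_abs, abs_of_pos hRpos, ← hR, div_self hRpos.ne']
  set φ : ℂ →+ ℝ := AddMonoidHom.mk' (fun b => ((starRingEnd ℂ) u * b).re)
    (fun b b' => by simp [mul_add]) with hφ
  have hφle : ∀ b ∈ s, φ b ≤ c := by
    intro b hbs
    have h1 : φ b ≤ ‖(starRingEnd ℂ) u * b‖ := by
      simpa [hφ] using Complex.re_le_norm ((starRingEnd ℂ) u * b)
    have h2 : ‖(starRingEnd ℂ) u * b‖ = ‖b‖ := by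
      rw [norm_mul, RCLike.norm_conj, hnu, one_mul]
    exact h1.trans (h2 ▸ hb b hbs)
  have hmap : (s.map φ).sum = c * s.card := by
    rw [← AddMonoidHom.map_multiset_sum, ← hT]
    have h5 : φ T = ((starRingEnd ℂ) u * T).re := rfl
    rw [h5, huT, Complex.ofReal_re, hsum]
  obtain ⟨t, hst⟩ := Multiset.exists_cons_of_mem ha
  have hrest : (t.map φ).sum ≤ c * t.card := by
    have h7 := auxSumLe (t.map φ) c (by
      intro b hbm
      obtain ⟨x, hx, rfl⟩ := Multiset.mem_map.mp hbm
      exact hφle x (hst ▸ Multiset.mem_cons_of_mem hx))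
    simpa [Multiset.card_map] using h7
  have hcards : (Multiset.card s : ℝ) = t.card + 1 := by
    rw [hst, Multiset.card_cons]; push_cast; ring
  have htotal : φ a + (t.map φ).sum = c * s.card := by
    rw [← hmap, hst]; simp
  have hφa : φ a = c := by
    have h1 : φ a ≤ c := hφle a ha
    have h2 : c ≤ φ a := by
      rw [hcards] at htotal
      nlinarith
    linarith
  set w : ℂ := (starRingEnd ℂ) u * a with hw
  have hwnorm : ‖w‖ ≤ c := by
    rw [hw, norm_mul, RCLike.norm_conj, hnu, one_mul]
    exact hb a ha
  have hwre : w.re = c := hφa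
  have hwim : w.im = 0 := by
    have h1 : w.re ^ 2 + w.im ^ 2 ≤ c ^ 2 := by
      have := Complex.sq_norm w
      rw [Complex.normSq_apply] at this
      have h2 : ‖w‖ ≤ c := hwnorm
      have h3 : (0:ℝ) ≤ ‖w‖ := norm_nonneg _
      nlinarith
    rw [hwre] at h1
    have h6 : w.im ^ 2 = 0 := le_antisymm (by linarith) (sq_nonneg _)
    exact pow_eq_zero_iff (by norm_num : (2:ℕ) ≠ 0) |>.mp h6
  have hwc : w = (c : ℂ) := by
    apply Complex.ext <;> simp [hwre, hwim]
  have huu : u * (starRingEnd ℂ) u = 1 := by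
    rw [Complex.mul_conj]
    norm_cast
    rw [Complex.normSq_eq_norm_sq, hnu, one_pow]
  calc a = (u * (starRingEnd ℂ) u) * a := by rw [huu, one_mul]
    _ = u * w := by rw [hw]; ring
    _ = (c : ℂ) * u := by rw [hwc]; ring
    _ = (c : ℂ) * (s.sum / (‖s.sum‖ : ℂ)) := by rw [hu, ← hT, ← hR]

lemma auxRootPow {d k : ℕ} (hk : k ≠ 0) {A : Matrix (Fin d) (Fin d) ℂ} (hA : A ^ k = 1)
    {μ : ℂ} (hμ : μ ∈ A.charpoly.roots) : μ ^ k = 1 := by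
  have hroot : A.charpoly.IsRoot μ := (Polynomial.mem_roots'.mp hμ).2
  have heval : A.charpoly.eval μ = (Matrix.scalar (Fin d) μ - A).det := by
    rw [Matrix.charpoly, _root_.eval_det, Matrix.matPolyEquiv_charmatrix]
    rw [Polynomial.eval_sub, Polynomial.eval_X, Polynomial.eval_C]
  have hdet : (Matrix.scalar (Fin d) μ - A).det = 0 := by
    rw [← heval]; exact hroot
  obtain ⟨v, hv0, hv⟩ := (Matrix.exists_mulVec_eq_zero_iff).mpr hdet
  have hAv : A.mulVec v = μ • v := by
    rw [Matrix.sub_mulVec] at hv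
    have hscal : (Matrix.scalar (Fin d) μ).mulVec v = μ • v := by
      funext i
      rw [Matrix.scalar_apply, Matrix.mulVec_diagonal]
      simp
    rw [hscal] at hv
    have := sub_eq_zero.mp hv
    exact this.symm
  have hpow : ∀ j : ℕ, (A ^ j).mulVec v = μ ^ j • v := by
    intro j
    induction j with
    | zero => simp [Matrix.one_mulVec]
    | succ j ih =>
      rw [pow_succ', pow_succ']
      rw [← Matrix.mulVec_mulVec, ih]
      rw [Matrix.mulVec_smul, hAv, smul_smul]
      rw [mul_comm]
  have hveq : v = μ ^ k • v := by
    have := hpow k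
    rw [hA, Matrix.one_mulVec] at this
    exact this
  obtain ⟨i, hi⟩ := Function.ne_iff.mp hv0
  have : (μ ^ k - 1) * v i = 0 := by
    have h2 : v i = μ ^ k * v i := by
      conv_lhs => rw [hveq]
      simp
    ring_nf
    ring_nf at h2
    linear_combination h2.symm
  rcases mul_eq_zero.mp this with h | h
  · have : μ ^ k = 1 := by linear_combination h
    exact this
  · exact absurd h hi

lemma auxRootNorm {d k : ℕ} (hk : k ≠ 0) {A : Matrix (Fin d) (Fin d) ℂ} (hA : A ^ k = 1)
    {μ : ℂ} (hμ : μ ∈ A.charpoly.roots) : ‖μ‖ = 1 :=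
  Complex.norm_eq_one_of_pow_eq_one (auxRootPow hk hA hμ) hk

lemma auxTraceLe {d k : ℕ} (hk : k ≠ 0) {A : Matrix (Fin d) (Fin d) ℂ} (hA : A ^ k = 1) :
    ‖A.trace‖ ≤ d := by
  rw [Matrix.trace_eq_sum_roots_charpoly]
  have h1 : ‖A.charpoly.roots.sum‖ ≤ ((A.charpoly.roots.map (fun μ => ‖μ‖)).sum : ℝ) :=
    norm_multiset_sum_le _
  have h2 : (A.charpoly.roots.map (fun μ => ‖μ‖)) =
      Multiset.replicate (Multiset.card A.charpoly.roots) 1 := by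
    apply Multiset.eq_replicate.mpr
    constructor
    · rw [Multiset.card_map]
    · intro b hb
      obtain ⟨μ, hμ, rfl⟩ := Multiset.mem_map.mp hb
      exact auxRootNorm hk hA hμ
  rw [h2, Multiset.sum_replicate] at h1
  simp only [nsmul_eq_mul, mul_one] at h1
  have h3 : Multiset.card A.charpoly.roots ≤ d := by
    have := Polynomial.card_roots' A.charpoly
    rwa [Matrix.charpoly_natDegree_eq_dim, Fintype.card_fin] at this
  calc ‖A.charpoly.roots.sum‖ ≤ (Multiset.card A.charpoly.roots : ℝ) := h1
    _ ≤ d := by exact_mod_cast h3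

lemma auxScalar {d k : ℕ} (hk : k ≠ 0) (hd : d ≠ 0) {A : Matrix (Fin d) (Fin d) ℂ}
    (hA : A ^ k = 1) (htr : ‖A.trace‖ = d) : A = (A.trace / d) • 1 := by
  haveI : Nonempty (Fin d) := Fin.pos_iff_nonempty.mp (Nat.pos_of_ne_zero hd)
  have hsplits : A.charpoly.Splits := IsAlgClosed.splits A.charpoly
  have hcard : Multiset.card A.charpoly.roots = d := by
    rw [Polynomial.splits_iff_card_roots.mp hsplits, Matrix.charpoly_natDegree_eq_dim,
      Fintype.card_fin]
  have htrace : A.trace = A.charpoly.roots.sum := Matrix.trace_eq_sum_roots_charpoly A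
  set ε : ℂ := A.trace / (d : ℂ) with hε
  have hdpos : (0:ℝ) < d := by exact_mod_cast Nat.pos_of_ne_zero hd
  have hsumnorm : ‖A.charpoly.roots.sum‖ = 1 * (Multiset.card A.charpoly.roots : ℝ) := by
    rw [← htrace, htr, hcard, one_mul]
  have hpos : 0 < ‖A.charpoly.roots.sum‖ := by
    rw [← htrace, htr]; exact hdpos
  have hall : ∀ μ ∈ A.charpoly.roots, μ = ε := by
    intro μ hμ
    have := auxTri A.charpoly.roots 1 (fun a ha => le_of_eq (auxRootNorm hk hA ha))
      hsumnorm hpos μ hμ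
    rw [this, ← htrace, htr, hε]
    push_cast
    ring
  have hroots : A.charpoly.roots = Multiset.replicate d ε :=
    Multiset.eq_replicate.mpr ⟨hcard, hall⟩
  have hcharpoly : A.charpoly = (Polynomial.X - Polynomial.C ε) ^ d := by
    rw [hsplits.eq_prod_roots_of_monic (Matrix.charpoly_monic A),
      hroots, Multiset.map_replicate, Multiset.prod_replicate]
  have hint : IsIntegral ℂ A := Matrix.isIntegral A
  have hdvd1 : minpoly ℂ A ∣ (Polynomial.X ^ k - 1 : ℂ[X]) := by
    apply minpoly.dvd
    rw [map_sub, map_pow, Polynomial.aeval_X, _root_.map_one, hA, sub_self]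
  have hsq : Squarefree (Polynomial.X ^ k - 1 : ℂ[X]) := by
    have := (Polynomial.separable_X_pow_sub_C (1:ℂ)
      (by exact_mod_cast hk) one_ne_zero).squarefree
    rwa [_root_.map_one] at this
  have hsqm : Squarefree (minpoly ℂ A) := hsq.squarefree_of_dvd hdvd1
  have hdvd2 : minpoly ℂ A ∣ (Polynomial.X - Polynomial.C ε) ^ d := by
    rw [← hcharpoly]; exact Matrix.minpoly_dvd_charpoly A
  have hprime : Prime (Polynomial.X - Polynomial.C ε) :=
    (Polynomial.irreducible_X_sub_C ε).prime
  obtain ⟨i, hid, hassoc⟩ := (dvd_prime_pow hprime d).mp hdvd2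
  have hdegpos : 0 < (minpoly ℂ A).natDegree := minpoly.natDegree_pos hint
  match i, hid, hassoc with
  | 0, _, hassoc =>
    exfalso
    rw [pow_zero] at hassoc
    have hunit : IsUnit (minpoly ℂ A) := (associated_one_iff_isUnit).mp hassoc
    rw [Polynomial.natDegree_eq_zero_of_isUnit hunit] at hdegpos
    exact lt_irrefl 0 hdegpos
  | 1, _, hassoc =>
    rw [pow_one] at hassoc
    have hmeq : minpoly ℂ A = Polynomial.X - Polynomial.C ε :=
      Polynomial.eq_of_monic_of_associated (minpoly.monic hint) (Polynomial.monic_X_sub_C ε)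
        hassoc
    have haev := minpoly.aeval ℂ A
    rw [hmeq, map_sub, Polynomial.aeval_X, Polynomial.aeval_C,
      Algebra.algebraMap_eq_smul_one, sub_eq_zero] at haev
    rw [haev, hε]
  | (i+2), _, hassoc =>
    exfalso
    have hd2 : (Polynomial.X - Polynomial.C ε) * (Polynomial.X - Polynomial.C ε) ∣
        minpoly ℂ A := by
      have h1 : (Polynomial.X - Polynomial.C ε) ^ (i + 2) ∣ minpoly ℂ A := hassoc.symm.dvd
      calc (Polynomial.X - Polynomial.C ε) * (Polynomial.X - Polynomial.C ε)
          = (Polynomial.X - Polynomial.C ε) ^ 2 := (sq _).symm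
        _ ∣ (Polynomial.X - Polynomial.C ε) ^ (i + 2) := pow_dvd_pow _ (by omega)
        _ ∣ minpoly ℂ A := h1
    exact Polynomial.not_isUnit_X_sub_C ε (hsqm _ hd2)

section RepLevel

variable {X : Type} [Group X] [Finite X]

lemma auxCharLe (V : FDRep ℂ X) (n : X) : ‖V.character n‖ ≤ finrank ℂ V := by
  set b := Module.finBasis ℂ V with hb
  set A := LinearMap.toMatrixAlgEquiv b (V.ρ n) with hA
  set k := orderOf n with hk
  have hkne : k ≠ 0 := (isOfFinOrder_of_finite n).orderOf_pos.ne'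
  have hApow : A ^ k = 1 := by
    rw [hA, ← map_pow, ← map_pow, hk, pow_orderOf_eq_one, _root_.map_one, _root_.map_one]
  have htr : V.character n = A.trace := by
    rw [FDRep.character, LinearMap.trace_eq_matrix_trace ℂ b]
    rfl
  rw [htr]
  exact auxTraceLe hkne hApow

lemma auxCharScalar (V : FDRep ℂ X) (hd : finrank ℂ V ≠ 0) (n : X)
    (h : ‖V.character n‖ = finrank ℂ V) :
    V.ρ n = ((V.character n) / (finrank ℂ V : ℂ)) • 1 := by
  set b := Module.finBasis ℂ V with hb
  set A := LinearMap.toMatrixAlgEquiv b (V.ρ n) with hA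
  set k := orderOf n with hk
  have hkne : k ≠ 0 := (isOfFinOrder_of_finite n).orderOf_pos.ne'
  have hApow : A ^ k = 1 := by
    rw [hA, ← map_pow, ← map_pow, hk, pow_orderOf_eq_one, _root_.map_one, _root_.map_one]
  have htr : V.character n = A.trace := by
    rw [FDRep.character, LinearMap.trace_eq_matrix_trace ℂ b]
    rfl
  have hAeq : A = (A.trace / (finrank ℂ V : ℂ)) • 1 := by
    apply auxScalar hkne hd hApow
    rw [← htr, h]
  have := congrArg (LinearMap.toMatrixAlgEquiv b).symm hAeq
  rw [AlgEquiv.symm_apply_apply, _root_.map_smul, _root_.map_one] at this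
  rw [this, htr]

lemma auxFinrankNeZero (V : FDRep ℂ X) (hs : CategoryTheory.Simple V) : finrank ℂ V ≠ 0 := by
  intro h
  have hsub : Subsingleton V := by
    have := Module.finrank_zero_iff (R := ℂ) (M := V)
    exact this.mp h
  apply CategoryTheory.id_nonzero V
  apply Action.Hom.ext
  ext v
  exact @Subsingleton.elim _ hsub _ _

end RepLevel

section Main

variable {G : Type} [Group G] [Fintype G]

/-- `g` is conjugate-into-`N` and all its conjugates act on `V` by the scalar `ε`. -/
def SAct (N : Subgroup G) (V : FDRep ℂ ↥N) (g : G) (ε : ℂ) : Prop :=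
  ∀ x : G, ∃ h : x * g * x⁻¹ ∈ N, V.ρ ⟨x * g * x⁻¹, h⟩ = ε • 1

lemma sact_one (N : Subgroup G) (V : FDRep ℂ ↥N) : SAct N V 1 1 := by
  intro x
  have h1 : x * 1 * x⁻¹ = 1 := by group
  have hmem : x * 1 * x⁻¹ ∈ N := by rw [h1]; exact N.one_mem
  refine ⟨hmem, ?_⟩
  have h2 : (⟨x * 1 * x⁻¹, hmem⟩ : ↥N) = 1 := Subtype.ext h1
  rw [h2, _root_.map_one, one_smul]

lemma sact_mul {N : Subgroup G} {V : FDRep ℂ ↥N} {g g' : G} {ε ε' : ℂ}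
    (h : SAct N V g ε) (h' : SAct N V g' ε') : SAct N V (g * g') (ε * ε') := by
  intro x
  obtain ⟨m1, e1⟩ := h x
  obtain ⟨m2, e2⟩ := h' x
  have hsplit : x * (g * g') * x⁻¹ = (x * g * x⁻¹) * (x * g' * x⁻¹) := by group
  have hmem : x * (g * g') * x⁻¹ ∈ N := by rw [hsplit]; exact N.mul_mem m1 m2
  refine ⟨hmem, ?_⟩
  have hsub : (⟨x * (g * g') * x⁻¹, hmem⟩ : ↥N) =
      (⟨x * g * x⁻¹, m1⟩ : ↥N) * ⟨x * g' * x⁻¹, m2⟩ := Subtype.ext hsplit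
  rw [hsub, _root_.map_mul, e1, e2, smul_mul_assoc, one_mul, smul_smul]

lemma sact_conj {N : Subgroup G} {V : FDRep ℂ ↥N} {g : G} {ε : ℂ}
    (h : SAct N V g ε) (y : G) : SAct N V (y * g * y⁻¹) ε := by
  intro x
  obtain ⟨m, e⟩ := h (x * y)
  have heq : x * (y * g * y⁻¹) * x⁻¹ = (x * y) * g * (x * y)⁻¹ := by group
  have hmem : x * (y * g * y⁻¹) * x⁻¹ ∈ N := by rw [heq]; exact m
  refine ⟨hmem, ?_⟩
  have hsub : (⟨x * (y * g * y⁻¹) * x⁻¹, hmem⟩ : ↥N) = ⟨(x * y) * g * (x * y)⁻¹, m⟩ :=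
    Subtype.ext heq
  rw [hsub, e]

/-- The subgroup of elements all of whose conjugates act trivially on `V`. -/
def kerGrp (N : Subgroup G) (V : FDRep ℂ ↥N) : Subgroup G where
  carrier := {g | SAct N V g 1}
  one_mem' := sact_one N V
  mul_mem' := fun {a b} ha hb => by
    have := sact_mul ha hb
    rwa [mul_one] at this
  inv_mem' := fun {a} ha => by
    intro x
    obtain ⟨m, e⟩ := ha x
    rw [one_smul] at e
    have heq : x * a⁻¹ * x⁻¹ = (x * a * x⁻¹)⁻¹ := by group
    have hmem : x * a⁻¹ * x⁻¹ ∈ N := by rw [heq]; exact N.inv_mem m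
    refine ⟨hmem, ?_⟩
    have hsub : (⟨x * a⁻¹ * x⁻¹, hmem⟩ : ↥N) = (⟨x * a * x⁻¹, m⟩ : ↥N)⁻¹ := Subtype.ext heq
    have hkey : V.ρ ((⟨x * a * x⁻¹, m⟩ : ↥N)⁻¹) * V.ρ (⟨x * a * x⁻¹, m⟩ : ↥N) = 1 := by
      rw [← _root_.map_mul, inv_mul_cancel, _root_.map_one]
    rw [e, mul_one] at hkey
    rw [hsub, hkey, one_smul]

lemma kerGrp_normal (N : Subgroup G) (V : FDRep ℂ ↥N) : (kerGrp N V).Normal :=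
  ⟨fun _a ha y => sact_conj ha y⟩

lemma sact_indChar {N : Subgroup G} {V : FDRep ℂ ↥N} {g : G} {ε : ℂ} (h : SAct N V g ε) :
    indChar N V.character g
      = ε * ((Nat.card ↥N : ℂ)⁻¹ * (Fintype.card G : ℂ) * (finrank ℂ V : ℂ)) := by
  unfold indChar
  have hterm : ∀ x : G, extZero N V.character (x * g * x⁻¹) = ε * (finrank ℂ V : ℂ) := by
    intro x
    obtain ⟨m, e⟩ := h x
    rw [extZero, dif_pos m, FDRep.character, e, _root_.map_smul, LinearMap.trace_one,
      smul_eq_mul]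
  rw [Finset.sum_congr rfl (fun x _ => hterm x), Finset.sum_const, Finset.card_univ,
    nsmul_eq_mul]
  ring

lemma sact_ne_zero {N : Subgroup G} {V : FDRep ℂ ↥N} {g : G} {ε : ℂ}
    (hd : finrank ℂ V ≠ 0) (h : SAct N V g ε) : ε ≠ 0 := by
  obtain ⟨m, e⟩ := h 1
  intro h0
  rw [h0, zero_smul] at e
  have h1 : V.ρ (⟨1 * g * 1⁻¹, m⟩ : ↥N) * V.ρ ((⟨1 * g * 1⁻¹, m⟩ : ↥N)⁻¹) = 1 := by
    rw [← _root_.map_mul, mul_inv_cancel, _root_.map_one]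
  rw [e, zero_mul] at h1
  have hnt : Nontrivial V := Module.finrank_pos_iff.mp (Nat.pos_of_ne_zero hd)
  obtain ⟨v, hv⟩ := @exists_ne V hnt 0
  have h2 := congrArg (fun (φ : V →ₗ[ℂ] V) => φ v) h1
  simp only [LinearMap.zero_apply, Module.End.one_apply] at h2
  exact hv h2.symm

lemma sact_inv {N : Subgroup G} {V : FDRep ℂ ↥N} {g : G} {ε : ℂ}
    (hd : finrank ℂ V ≠ 0) (h : SAct N V g ε) : SAct N V g⁻¹ ε⁻¹ := by
  have hεne : ε ≠ 0 := sact_ne_zero hd h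
  intro x
  obtain ⟨m, e⟩ := h x
  have heq : x * g⁻¹ * x⁻¹ = (x * g * x⁻¹)⁻¹ := by group
  have hmem : x * g⁻¹ * x⁻¹ ∈ N := by rw [heq]; exact N.inv_mem m
  refine ⟨hmem, ?_⟩
  have hsub : (⟨x * g⁻¹ * x⁻¹, hmem⟩ : ↥N) = (⟨x * g * x⁻¹, m⟩ : ↥N)⁻¹ := Subtype.ext heq
  have hkey : V.ρ ((⟨x * g * x⁻¹, m⟩ : ↥N)⁻¹) * V.ρ (⟨x * g * x⁻¹, m⟩ : ↥N) = 1 := by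
    rw [← _root_.map_mul, inv_mul_cancel, _root_.map_one]
  rw [e, mul_smul_comm, mul_one] at hkey
  rw [hsub]
  calc V.ρ ((⟨x * g * x⁻¹, m⟩ : ↥N)⁻¹)
      = (ε⁻¹ * ε) • V.ρ ((⟨x * g * x⁻¹, m⟩ : ↥N)⁻¹) := by
        rw [inv_mul_cancel₀ hεne, one_smul]
    _ = ε⁻¹ • (ε • V.ρ ((⟨x * g * x⁻¹, m⟩ : ↥N)⁻¹)) := by rw [smul_smul]
    _ = ε⁻¹ • 1 := by rw [hkey]

lemma kerGrp_indChar {N : Subgroup G} {V : FDRep ℂ ↥N} (g : G) (hg : g ∈ kerGrp N V) :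
    indChar N V.character g = indChar N V.character 1 := by
  rw [sact_indChar (show SAct N V g 1 from hg), sact_indChar (sact_one N V)]

lemma sact_of_cent {N : Subgroup G} {V : FDRep ℂ ↥N} (hd : finrank ℂ V ≠ 0) (z : G)
    (hz : (((‖indChar N V.character z‖ : ℝ)) : ℂ) = indChar N V.character 1) :
    ∃ ε : ℂ, SAct N V z ε := by
  classical
  set dR : ℝ := (finrank ℂ V : ℝ) with hdR
  set a : G → ℂ := fun x => extZero N V.character (x * z * x⁻¹) with hafun
  set T : ℂ := ∑ x : G, a x with hTdef
  have hNpos : (0:ℝ) < (Nat.card ↥N : ℝ) := by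
    have : 0 < Nat.card ↥N := Nat.card_pos
    exact_mod_cast this
  have hGpos : (0:ℝ) < (Fintype.card G : ℝ) := by
    have : 0 < Fintype.card G := Fintype.card_pos
    exact_mod_cast this
  have hdpos : (0:ℝ) < dR := by
    rw [hdR]; exact_mod_cast Nat.pos_of_ne_zero hd
  have hfz : indChar N V.character z = (Nat.card ↥N : ℂ)⁻¹ * T := rfl
  have hf1 : indChar N V.character 1
      = (Nat.card ↥N : ℂ)⁻¹ * (Fintype.card G : ℂ) * (finrank ℂ V : ℂ) := by
    rw [sact_indChar (sact_one N V), one_mul]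
  have hTnorm : ‖T‖ = (Fintype.card G : ℝ) * dR := by
    rw [hfz, hf1] at hz
    rw [norm_mul, norm_inv, Complex.norm_natCast] at hz
    have hz2 : ((((Nat.card ↥N : ℝ))⁻¹ * ‖T‖ : ℝ) : ℂ)
        = ((((Nat.card ↥N : ℝ))⁻¹ * ((Fintype.card G : ℝ) * dR) : ℝ) : ℂ) := by
      rw [hz, hdR]
      push_cast
      ring
    have hz3 := Complex.ofReal_inj.mp hz2
    have hNne : ((Nat.card ↥N : ℝ))⁻¹ ≠ 0 := inv_ne_zero hNpos.ne'
    exact mul_left_cancel₀ hNne hz3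
  set s : Multiset ℂ := Finset.univ.val.map a with hs
  have hssum : s.sum = T := rfl
  have hscard : Multiset.card s = Fintype.card G := by
    rw [hs, Multiset.card_map, ← Finset.card_def, Finset.card_univ]
  have hbound : ∀ b ∈ s, ‖b‖ ≤ dR := by
    intro b hb
    obtain ⟨x, _, rfl⟩ := Multiset.mem_map.mp hb
    rw [hafun]
    simp only []
    rw [extZero]
    split
    · rename_i hmem
      rw [hdR]
      exact auxCharLe V _
    · simp [hdpos.le]
  have hsum' : ‖s.sum‖ = dR * (Multiset.card s : ℝ) := by
    rw [hssum, hscard, hTnorm]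
    ring
  have hpos' : 0 < ‖s.sum‖ := by
    rw [hssum, hTnorm]
    positivity
  have htri := auxTri s dR hbound hsum' hpos'
  set ε : ℂ := T / ((‖T‖ : ℝ) : ℂ) with hε
  refine ⟨ε, ?_⟩
  intro x
  have hax : a x = (dR : ℂ) * ε := by
    have hx : a x ∈ s := Multiset.mem_map_of_mem a (Finset.mem_univ x)
    have := htri (a x) hx
    rw [hssum] at this
    exact this
  have haxne : a x ≠ 0 := by
    rw [hax]
    apply mul_ne_zero
    · exact_mod_cast hdpos.ne'
    · rw [hε]
      apply div_ne_zero
      · intro h0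
        rw [h0] at hTnorm
        simp only [norm_zero] at hTnorm
        nlinarith
      · intro h0
        have : ‖T‖ = 0 := by exact_mod_cast h0
        rw [hTnorm] at this
        nlinarith
  have hmem : x * z * x⁻¹ ∈ N := by
    by_contra hcon
    apply haxne
    rw [hafun]
    simp only []
    rw [extZero, dif_neg hcon]
  refine ⟨hmem, ?_⟩
  have hchar : V.character ⟨x * z * x⁻¹, hmem⟩ = (dR : ℂ) * ε := by
    rw [← hax, hafun]
    simp only []
    rw [extZero, dif_pos hmem]
  have hnormε : ‖ε‖ = 1 := by
    rw [hε, norm_div, Complex.norm_real, Real.norm_eq_abs, abs_of_pos]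
    · exact div_self (by rw [hTnorm]; positivity)
    · rw [hTnorm]; positivity
  have hnormchar : ‖V.character ⟨x * z * x⁻¹, hmem⟩‖ = (finrank ℂ V : ℝ) := by
    rw [hchar, norm_mul, hnormε, mul_one, Complex.norm_real, Real.norm_eq_abs,
      abs_of_pos hdpos, hdR]
  have hscal := auxCharScalar V hd _ hnormchar
  rw [hchar] at hscal
  rw [hscal]
  congr 1
  rw [hdR]
  push_cast
  exact mul_div_cancel_left₀ ε (by exact_mod_cast hd)

end Main


end MyAux

open scoped commutatorElement

theorem stmt_15 [Group G] [Fintype G] (N : Subgroup G) (hN : N.Normal) (ψ : ↥N → ℂ)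
    (hψ : IsIrrChar ↥N ψ) (Z : Subgroup G) (hZ : (Z : Set G) = centSet (indChar N ψ))
    (hZN : Z ≤ N) (hZnorm : Z.Normal)
    (hab : ∀ a ∈ N, ∀ b ∈ N, a⁻¹ * b⁻¹ * a * b ∈ Z) :
    (∀ M : Subgroup G, Z ≤ M → M ≤ N →
      ((M.Normal ∧ ∀ a ∈ M, ∀ b ∈ M,
          zetaChar (indChar N ψ) (a⁻¹ * b⁻¹ * a * b) = 1) ↔
        ∃ L : Subgroup G, L.Normal ∧ L ≤ N ∧
          (((⁅L, L⁆ : Subgroup G)) : Set G) ⊆ kerSet (indChar N ψ) ∧ M = L ⊔ Z)) ∧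
    ((∀ L : Subgroup G, L.Normal → L ≤ N →
        (((⁅L, L⁆ : Subgroup G)) : Set G) ⊆ kerSet (indChar N ψ) → L ≤ Z) ↔
      (∀ M : Subgroup G, M.Normal → Z ≤ M → M ≤ N →
        (∀ a ∈ M, ∀ b ∈ M, zetaChar (indChar N ψ) (a⁻¹ * b⁻¹ * a * b) = 1) →
        M = Z)) := by
  classical
  obtain ⟨V, hsimp, hcharV⟩ := hψ
  subst hcharV
  have hdne : Module.finrank ℂ V ≠ 0 := auxFinrankNeZero V hsimp
  set f : G → ℂ := indChar N V.character with hf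
  have hf1 : f 1 = (Nat.card ↥N : ℂ)⁻¹ * (Fintype.card G : ℂ) * (Module.finrank ℂ V : ℂ) := by
    rw [hf, sact_indChar (sact_one N V), one_mul]
  have hf1ne : f 1 ≠ 0 := by
    rw [hf1]
    have h1 : (Nat.card ↥N : ℂ) ≠ 0 := by
      have : 0 < Nat.card ↥N := Nat.card_pos
      exact_mod_cast this.ne'
    have h2 : (Fintype.card G : ℂ) ≠ 0 := by
      have : 0 < Fintype.card G := Fintype.card_pos
      exact_mod_cast this.ne'
    have h3 : ((Module.finrank ℂ V : ℕ) : ℂ) ≠ 0 := by exact_mod_cast hdne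
    exact mul_ne_zero (mul_ne_zero (inv_ne_zero h1) h2) h3
  haveI hKnorm : (kerGrp N V).Normal := kerGrp_normal N V
  have hKker : ∀ g ∈ kerGrp N V, f g = f 1 := fun g hg => kerGrp_indChar g hg
  have hZcent : ∀ z ∈ Z, (((‖f z‖ : ℝ)) : ℂ) = f 1 := by
    intro z hz
    have h1 : z ∈ (Z : Set G) := hz
    rw [hZ] at h1
    exact h1
  have hZsact : ∀ z ∈ Z, ∃ ε, SAct N V z ε := fun z hz =>
    sact_of_cent hdne z (hZcent z hz)
  have hZKmem : ∀ z ∈ Z, f z = f 1 → z ∈ kerGrp N V := by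
    intro z hz hfz
    obtain ⟨ε, hε⟩ := hZsact z hz
    have h1 : f z = ε * ((Nat.card ↥N : ℂ)⁻¹ * (Fintype.card G : ℂ) * (Module.finrank ℂ V : ℂ)) :=
      sact_indChar hε
    have h2 : ε = 1 := by
      have h4 : (Nat.card ↥N : ℂ)⁻¹ * (Fintype.card G : ℂ) * (Module.finrank ℂ V : ℂ) ≠ 0 := by
        rw [← hf1]; exact hf1ne
      apply mul_right_cancel₀ h4
      rw [one_mul]
      exact h1.symm.trans (hfz.trans hf1)
    rw [h2] at hε
    exact hε
  have hZcomm : ∀ z ∈ Z, ∀ g : G, ⁅z, g⁆ ∈ kerGrp N V := by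
    intro z hz g
    obtain ⟨ε, hε⟩ := hZsact z hz
    have hεne : ε ≠ 0 := sact_ne_zero hdne hε
    have h1 : SAct N V (g * z⁻¹ * g⁻¹) ε⁻¹ := sact_conj (sact_inv hdne hε) g
    have h2 : SAct N V (z * (g * z⁻¹ * g⁻¹)) (ε * ε⁻¹) := sact_mul hε h1
    rw [mul_inv_cancel₀ hεne] at h2
    have h3 : z * (g * z⁻¹ * g⁻¹) = ⁅z, g⁆ := by
      rw [commutatorElement_def]; group
    rw [h3] at h2
    exact h2
  have part1 : ∀ M : Subgroup G, Z ≤ M → M ≤ N →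
      ((M.Normal ∧ ∀ a ∈ M, ∀ b ∈ M,
          zetaChar f (a⁻¹ * b⁻¹ * a * b) = 1) ↔
        ∃ L : Subgroup G, L.Normal ∧ L ≤ N ∧
          (((⁅L, L⁆ : Subgroup G)) : Set G) ⊆ kerSet f ∧ M = L ⊔ Z) := by
    intro M hZM hMN
    constructor
    · rintro ⟨hMnorm, hcomm⟩
      refine ⟨M, hMnorm, hMN, ?_, (sup_eq_left.mpr hZM).symm⟩
      have hle : (⁅M, M⁆ : Subgroup G) ≤ kerGrp N V := by
        rw [Subgroup.commutator_le]
        intro g1 hg1 g2 hg2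
        have hc := hcomm g1⁻¹ (M.inv_mem hg1) g2⁻¹ (M.inv_mem hg2)
        have he : g1⁻¹⁻¹ * g2⁻¹⁻¹ * g1⁻¹ * g2⁻¹ = ⁅g1, g2⁆ := by
          rw [commutatorElement_def]; group
        rw [he] at hc
        have hfc : f ⁅g1, g2⁆ = f 1 := by
          have h5 : f ⁅g1, g2⁆ / f 1 = 1 := hc
          field_simp at h5
          exact h5
        have hcZ : ⁅g1, g2⁆ ∈ Z := by
          have h6 := hab g1⁻¹ (N.inv_mem (hMN hg1)) g2⁻¹ (N.inv_mem (hMN hg2))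
          rwa [he] at h6
        exact hZKmem _ hcZ hfc
      intro x hx
      exact hKker x (hle hx)
    · rintro ⟨L, hLnorm, hLN, hLker, rfl⟩
      haveI := hLnorm
      haveI := hZnorm
      refine ⟨Subgroup.sup_normal L Z, ?_⟩
      have hLLK : ∀ l1 ∈ L, ∀ l2 ∈ L, ⁅l1, l2⁆ ∈ kerGrp N V := by
        intro l1 h1 l2 h2
        have hcZ : ⁅l1, l2⁆ ∈ Z := by
          have h6 := hab l1⁻¹ (N.inv_mem (hLN h1)) l2⁻¹ (N.inv_mem (hLN h2))
          have he : l1⁻¹⁻¹ * l2⁻¹⁻¹ * l1⁻¹ * l2⁻¹ = ⁅l1, l2⁆ := by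
            rw [commutatorElement_def]; group
          rwa [he] at h6
        have hker : f ⁅l1, l2⁆ = f 1 :=
          hLker (Subgroup.commutator_mem_commutator h1 h2)
        exact hZKmem _ hcZ hker
      set π := QuotientGroup.mk' (kerGrp N V) with hπ
      have hcentral : ∀ z ∈ Z, ∀ q : G ⧸ (kerGrp N V), Commute (π z) q := by
        intro z hz q
        obtain ⟨g, rfl⟩ := QuotientGroup.mk'_surjective (kerGrp N V) q
        have h1 : π ⁅z, g⁆ = 1 := (QuotientGroup.eq_one_iff _).mpr (hZcomm z hz g)
        rw [map_commutatorElement] at h1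
        exact commutatorElement_eq_one_iff_commute.mp h1
      have hsup : (⁅L ⊔ Z, L ⊔ Z⁆ : Subgroup G) ≤ kerGrp N V := by
        rw [Subgroup.commutator_le]
        intro a ha b hb
        have ha' : a ∈ (↑L * ↑Z : Set G) := by
          rw [← Subgroup.mul_normal]; exact ha
        have hb' : b ∈ (↑L * ↑Z : Set G) := by
          rw [← Subgroup.mul_normal]; exact hb
        obtain ⟨l1, hl1, z1, hz1, rfl⟩ := ha'
        obtain ⟨l2, hl2, z2, hz2, rfl⟩ := hb'
        refine (QuotientGroup.eq_one_iff _).mp ?_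
        rw [show ((⁅l1 * z1, l2 * z2⁆ : G) : G ⧸ kerGrp N V) = π ⁅l1 * z1, l2 * z2⁆ from rfl,
          map_commutatorElement]
        apply commutatorElement_eq_one_iff_commute.mpr
        rw [_root_.map_mul, _root_.map_mul]
        have hll : Commute (π l1) (π l2) := by
          apply commutatorElement_eq_one_iff_commute.mp
          rw [← map_commutatorElement]
          exact (QuotientGroup.eq_one_iff _).mpr (hLLK l1 hl1 l2 hl2)
        exact Commute.mul_left (hll.mul_right (hcentral z2 hz2 (π l1)).symm)
          (hcentral z1 hz1 (π l2 * π z2))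
      intro a ha b hb
      have hmem : ⁅a⁻¹, b⁻¹⁆ ∈ kerGrp N V :=
        hsup (Subgroup.commutator_mem_commutator ((L ⊔ Z).inv_mem ha) ((L ⊔ Z).inv_mem hb))
      have he : ⁅a⁻¹, b⁻¹⁆ = a⁻¹ * b⁻¹ * a * b := by
        rw [commutatorElement_def]; group
      rw [he] at hmem
      have hfc := hKker _ hmem
      show f (a⁻¹ * b⁻¹ * a * b) / f 1 = 1
      rw [hfc, div_self hf1ne]
  refine ⟨part1, ?_, ?_⟩
  · intro hlin M hMnorm hZM hMN hcomm
    obtain ⟨L, hLn, hLN, hLker, hMeq⟩ := (part1 M hZM hMN).mp ⟨hMnorm, hcomm⟩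
    have hLZ : L ≤ Z := hlin L hLn hLN hLker
    rw [hMeq, sup_eq_right.mpr hLZ]
  · intro hmax L hLn hLN hLker
    have h1 := (part1 (L ⊔ Z) le_sup_right (sup_le hLN hZN)).mpr ⟨L, hLn, hLN, hLker, rfl⟩
    have h2 := hmax (L ⊔ Z) h1.1 le_sup_right (sup_le hLN hZN) h1.2
    exact le_sup_left.trans (le_of_eq h2)

end
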